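/- If E is a fibrewise pointed space over B that is fibrewise contractible (fibrewise homotopy equivalent to B), then TC_{B,r}(E) = 0; conversely, if TC_{B,r}(E) = 0 then E is fibrewise homotopy equivalent to B. -/

import Mathlib

open Set

/-- Two continuous maps are fibrewise homotopic over `B`: there is a homotopy
whose every time-slice commutes with the projections to `B`. -/
def FibHomotopic {B X Y : Type*} [TopologicalSpace B] [TopologicalSpace X] [TopologicalSpace Y]
    (pX : X → B) (pY : Y → B) (f g : C(X, Y)) : Prop :=
  ∃ H : f.Homotopy g, ∀ (x : X) (t : unitInterval), pY (H (t, x)) = pX x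

/-- Sequential parametrized homotopic distance of a family of fibrewise maps:
the least `n` such that `X` admits an open cover by `n + 1` open sets on each of
which all the maps are pairwise fibrewise homotopic (`∞` if none exists). -/
noncomputable def fibDist {B X Y ι : Type*} [TopologicalSpace B] [TopologicalSpace X]
    [TopologicalSpace Y] (pX : X → B) (pY : Y → B) (f : ι → C(X, Y)) : ℕ∞ :=
  sInf {n : ℕ∞ | ∃ k : ℕ, (k : ℕ∞) = n ∧ ∃ U : Fin (k + 1) → Set X,
    (∀ i, IsOpen (U i)) ∧ (⋃ i, U i) = Set.univ ∧
    ∀ i s t, FibHomotopic (fun x : U i => pX (x : X)) pY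
      ((f s).restrict (U i)) ((f t).restrict (U i))}

/-- Fibrewise sectional category of a fibrewise map `f : E → X` over `B`: the least `k`
such that `X` has an open cover by `k + 1` open sets, each admitting a fibrewise map
`s : U → E` with `f ∘ s` fibrewise homotopic to the inclusion. -/
noncomputable def fibSecat {B E X : Type*} [TopologicalSpace B] [TopologicalSpace E]
    [TopologicalSpace X] (pE : E → B) (pX : X → B) (f : C(E, X)) : ℕ∞ :=
  sInf {n : ℕ∞ | ∃ k : ℕ, (k : ℕ∞) = n ∧ ∃ U : Fin (k + 1) → Set X,
    (∀ i, IsOpen (U i)) ∧ (⋃ i, U i) = Set.univ ∧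
    ∀ i, ∃ s : C(U i, E), (∀ x : U i, pE (s x) = pX (x : X)) ∧
      FibHomotopic (fun x : U i => pX (x : X)) pX (f.comp s)
        ⟨Subtype.val, continuous_subtype_val⟩}

/-- The fibrewise free path space of `Y` over `B`: pairs `(b, γ)` with `p_Y ∘ γ`
constant at `b`. -/
abbrev FibPathSpace {B Y : Type*} [TopologicalSpace B] [TopologicalSpace Y] (pY : Y → B) :
    Type _ := {z : B × C(unitInterval, Y) // ∀ t, pY (z.2 t) = z.1}

/-- The `r`-fold fibred product of `Y` over `B`. -/
abbrev FibPow {B Y : Type*} [TopologicalSpace B] [TopologicalSpace Y] (pY : Y → B) (r : ℕ) :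
    Type _ := {v : Fin r → Y // ∀ i j, pY (v i) = pY (v j)}

/-- The time `i / (r - 1)` in the unit interval. -/
noncomputable def evalTime (r : ℕ) (i : Fin r) : unitInterval :=
  ⟨(i : ℝ) / ((r : ℝ) - 1), by
    have h1 : 1 ≤ r := Nat.one_le_iff_ne_zero.mpr (by rintro rfl; exact i.elim0)
    have h0 : (0:ℝ) ≤ (r:ℝ) - 1 := by
      have : (1:ℝ) ≤ (r:ℝ) := by exact_mod_cast h1
      linarith
    have hi : (i:ℝ) ≤ (r:ℝ) - 1 := by
      have h2 : ((i:ℕ):ℝ) ≤ ((r - 1 : ℕ):ℝ) := Nat.cast_le.mpr (by omega)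
      rwa [Nat.cast_sub h1, Nat.cast_one] at h2
    exact ⟨div_nonneg (by positivity) h0, div_le_one_of_le₀ hi h0⟩⟩

/-- The fibrewise evaluation fibration `Π_{r,Y} : P_B(Y) → Y_B^r`, sending `(b, γ)` to
`(γ(0), γ(1/(r-1)), …, γ(1))`. -/
noncomputable def fibPi {B Y : Type*} [TopologicalSpace B] [TopologicalSpace Y] (pY : Y → B)
    (r : ℕ) : C(FibPathSpace pY, FibPow pY r) :=
  ⟨fun z => ⟨fun i => z.1.2 (evalTime r i),
      fun i j => (z.2 (evalTime r i)).trans (z.2 (evalTime r j)).symm⟩, by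
    apply Continuous.subtype_mk
    exact continuous_pi fun i =>
      (continuous_eval_const (evalTime r i)).comp
        (continuous_snd.comp continuous_subtype_val)⟩

/-- The `i`-th projection `Y_B^r → Y`. -/
def fibPrj {B Y : Type*} [TopologicalSpace B] [TopologicalSpace Y] (pY : Y → B) (r : ℕ)
    (i : Fin r) : C(FibPow pY r, Y) :=
  ⟨fun v => v.1 i, ((continuous_apply i).comp continuous_subtype_val)⟩

/-- Fibrewise homotopy equivalence of two fibrewise spaces over `B`. -/
def FibHtpyEquiv {B E E' : Type*} [TopologicalSpace B] [TopologicalSpace E] [TopologicalSpace E']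
    (pE : E → B) (pE' : E' → B) : Prop :=
  ∃ (f : C(E, E')) (g : C(E', E)), (∀ x, pE' (f x) = pE x) ∧ (∀ x, pE (g x) = pE' x) ∧
    FibHomotopic pE pE (g.comp f) (ContinuousMap.id E) ∧
    FibHomotopic pE' pE' (f.comp g) (ContinuousMap.id E')

/-!
A fibrewise homotopy equivalence `E ≃ B` amounts to a section `g` of `p_E` with `g ∘ p_E`
fibrewise homotopic to the identity, and `TC_{B,r}(E) = 0` means that `Π_{r,E}` has a global
fibrewise homotopy section. Given `g`, send a tuple over `b` to the constant path at `g b`; the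
homotopy `g ∘ p_E ≃ id`, applied coordinatewise, deforms its image under `Π_{r,E}` back to the
tuple. Conversely, evaluate a homotopy section `s` of `Π_{r,E}` at the tuple
`(x, s_E (p_E x), …, s_E (p_E x))`: its value at time `0` is homotopic to `x`, at time `1`
(here `r ≥ 2`) to `s_E (p_E x)`, and the path itself joins the two, so `id ≃ s_E ∘ p_E`
fibrewise.
-/

open unitInterval

namespace FibHomotopic

variable {B X Y Z : Type*} [TopologicalSpace B] [TopologicalSpace X] [TopologicalSpace Y]
  [TopologicalSpace Z] {pX : X → B} {pY : Y → B} {pZ : Z → B} {f g h : C(X, Y)}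

theorem refl (hf : ∀ x, pY (f x) = pX x) : FibHomotopic pX pY f f :=
  ⟨.refl f, fun x _ => hf x⟩

theorem of_eq (hfg : f = g) (hf : ∀ x, pY (f x) = pX x) : FibHomotopic pX pY f g :=
  hfg ▸ refl hf

theorem symm (hfg : FibHomotopic pX pY f g) : FibHomotopic pX pY g f :=
  let ⟨H, hH⟩ := hfg
  ⟨H.symm, fun x t => hH x (σ t)⟩

theorem trans (hfg : FibHomotopic pX pY f g) (hgh : FibHomotopic pX pY g h) :
    FibHomotopic pX pY f h := by
  obtain ⟨F, hF⟩ := hfg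
  obtain ⟨G, hG⟩ := hgh
  refine ⟨F.trans G, fun x t => ?_⟩
  rw [ContinuousMap.Homotopy.trans_apply]
  split_ifs
  exacts [hF x _, hG x _]

theorem comp_right (hfg : FibHomotopic pX pY f g) (k : C(Z, X)) (hk : ∀ z, pX (k z) = pZ z) :
    FibHomotopic pZ pY (f.comp k) (g.comp k) :=
  let ⟨H, hH⟩ := hfg
  ⟨H.compContinuousMap k, fun z t => (hH (k z) t).trans (hk z)⟩

theorem comp_left (hfg : FibHomotopic pX pY f g) (k : C(Y, Z)) (hk : ∀ y, pZ (k y) = pY y) :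
    FibHomotopic pX pZ (k.comp f) (k.comp g) :=
  let ⟨H, hH⟩ := hfg
  ⟨(ContinuousMap.Homotopy.refl k).comp H, fun x t => (hk _).trans (hH x t)⟩

end FibHomotopic

section Secat

variable {B E X : Type*} [TopologicalSpace B] [TopologicalSpace E] [TopologicalSpace X]
  {pE : E → B} {pX : X → B} {f : C(E, X)}

theorem fibSecat_eq_zero_iff :
    fibSecat pE pX f = 0 ↔ ∃ s : C(X, E), (∀ x, pE (s x) = pX x) ∧
      FibHomotopic pX pX (f.comp s) (ContinuousMap.id X) := by
  constructor
  · intro h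
    obtain ⟨_, ⟨k, rfl, U, -, hUcov, hUsec⟩, hk⟩ := sInf_lt_iff.mp (h.trans_lt zero_lt_one)
    obtain rfl : k = 0 := by exact_mod_cast Order.lt_one_iff.mp hk
    have hU : ∀ x, x ∈ U 0 := fun x => by
      obtain ⟨i, hi⟩ := mem_iUnion.mp (hUcov.superset (mem_univ x))
      rwa [Fin.eq_zero i] at hi
    obtain ⟨s, hs, hH⟩ := hUsec 0
    let incl : C(X, U 0) := ⟨fun x => ⟨x, hU x⟩, by fun_prop⟩
    exact ⟨s.comp incl, fun x => hs (incl x), hH.comp_right incl fun _ => rfl⟩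
  · rintro ⟨s, hs, hH⟩
    refine nonpos_iff_eq_zero.mp (sInf_le ⟨0, rfl, fun _ => univ, fun _ => isOpen_univ,
      iUnion_const _, fun _ => ⟨s.comp ⟨Subtype.val, continuous_subtype_val⟩, fun x => hs x, ?_⟩⟩)
    exact hH.comp_right ⟨Subtype.val, continuous_subtype_val⟩ fun _ => rfl

end Secat

section FibrewiseSpace

variable {B E X : Type*} [TopologicalSpace B] [TopologicalSpace E] [TopologicalSpace X]
  {pE : E → B} {pX : X → B}

theorem fibHtpyEquiv_id_iff_exists_section (hpE : Continuous pE) :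
    FibHtpyEquiv pE (id : B → B) ↔ ∃ g : C(B, E), (∀ b, pE (g b) = b) ∧
      FibHomotopic pE pE (g.comp ⟨pE, hpE⟩) (ContinuousMap.id E) := by
  constructor
  · rintro ⟨f, g, hf, hg, hgf, -⟩
    obtain rfl : f = ⟨pE, hpE⟩ := ContinuousMap.ext hf
    exact ⟨g, hg, hgf⟩
  · rintro ⟨g, hg, hG⟩
    exact ⟨⟨pE, hpE⟩, g, fun _ => rfl, hg, hG, .of_eq (ContinuousMap.ext hg) hg⟩

def FibPathSpace.eval (pE : E → B) (t : I) : C(FibPathSpace pE, E) :=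
  ⟨fun z => z.1.2 t, (continuous_eval_const t).comp (continuous_snd.comp continuous_subtype_val)⟩

theorem FibHomotopic.eval_zero_eval_one (γ : C(X, FibPathSpace pE))
    (hγ : ∀ x, (γ x).1.1 = pX x) :
    FibHomotopic pX pE ((FibPathSpace.eval pE 0).comp γ) ((FibPathSpace.eval pE 1).comp γ) :=
  ⟨{ toFun := fun p => (γ p.2).1.2 p.1
     continuous_toFun := continuous_eval.comp
       ((continuous_snd.comp (continuous_subtype_val.comp
         (γ.continuous.comp continuous_snd))).prodMk continuous_fst)
     map_zero_left := fun _ => rfl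
     map_one_left := fun _ => rfl },
    fun x t => ((γ x).2 t).trans (hγ x)⟩

end FibrewiseSpace

theorem evalTime_zero (r : ℕ) [NeZero r] : evalTime r 0 = 0 :=
  Subtype.ext (by simp [evalTime])

theorem evalTime_last {r : ℕ} (hr : 2 ≤ r) : evalTime r ⟨r - 1, by omega⟩ = 1 := by
  have hr' : (r : ℝ) - 1 ≠ 0 := by
    have : (2 : ℝ) ≤ r := by exact_mod_cast hr
    linarith
  refine Subtype.ext ?_
  simp [evalTime, Nat.cast_sub (by omega : 1 ≤ r), div_self hr']

section FibPi

variable {B E : Type*} [TopologicalSpace B] [TopologicalSpace E] {pE : E → B} {r : ℕ} [NeZero r]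

theorem exists_fibPi_section_of_fibHomotopic (hpE : Continuous pE) {g : C(B, E)}
    (hg : ∀ b, pE (g b) = b) (hG : FibHomotopic pE pE (g.comp ⟨pE, hpE⟩) (ContinuousMap.id E)) :
    ∃ s : C(FibPow pE r, FibPathSpace pE), (∀ v, (s v).1.1 = pE (v.1 0)) ∧
      FibHomotopic (fun v : FibPow pE r => pE (v.1 0)) (fun v => pE (v.1 0))
        ((fibPi pE r).comp s) (ContinuousMap.id _) := by
  obtain ⟨G, hGfib⟩ := hG
  have hbase : Continuous fun v : FibPow pE r => pE (v.1 0) :=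
    hpE.comp ((continuous_apply 0).comp continuous_subtype_val)
  refine ⟨⟨fun v => ⟨(pE (v.1 0), .const _ (g (pE (v.1 0)))), fun _ => hg _⟩, ?_⟩, fun _ => rfl,
    ⟨{ toFun := fun p => ⟨fun j => G (p.1, p.2.1 j), fun i j => by
          rw [hGfib, hGfib]; exact p.2.2 i j⟩
       continuous_toFun := ?_
       map_zero_left := fun v => Subtype.ext (funext fun j => ?_)
       map_one_left := fun v => Subtype.ext (funext fun j => G.apply_one _) },
      fun v t => hGfib _ t⟩⟩
  · exact (hbase.prodMk ((ContinuousMap.continuous_const'.comp g.continuous).comp hbase)).subtype_mk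
      _
  · exact (continuous_pi fun j => G.continuous.comp (continuous_fst.prodMk
      (((continuous_apply j).comp continuous_subtype_val).comp continuous_snd))).subtype_mk _
  · change G (0, v.1 j) = g (pE (v.1 0))
    rw [G.apply_zero]
    exact congrArg g (v.2 j 0)

def FibPow.padSection (hpE : Continuous pE) (sE : C(B, E)) (hsE : ∀ b, pE (sE b) = b) :
    C(E, FibPow pE r) :=
  ⟨fun x => ⟨fun i => if i = 0 then x else sE (pE x), fun i j => by
      by_cases hi : i = 0 <;> by_cases hj : j = 0 <;> simp [hi, hj, hsE]⟩,
    (continuous_pi fun i => by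
      by_cases hi : i = 0
      · simpa [hi] using continuous_id'
      · simpa [hi] using sE.continuous.comp' hpE).subtype_mk _⟩

@[simp]
theorem FibPow.padSection_apply (hpE : Continuous pE) (sE : C(B, E)) (hsE : ∀ b, pE (sE b) = b)
    (x : E) (i : Fin r) :
    (FibPow.padSection hpE sE hsE x).1 i = if i = 0 then x else sE (pE x) :=
  rfl

theorem fibPrj_comp_padSection_zero (hpE : Continuous pE) (sE : C(B, E))
    (hsE : ∀ b, pE (sE b) = b) :
    (fibPrj pE r 0).comp (FibPow.padSection hpE sE hsE) = ContinuousMap.id E :=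
  ContinuousMap.ext fun _ => by simp [fibPrj]

theorem fibPrj_comp_padSection_of_ne_zero (hpE : Continuous pE) (sE : C(B, E))
    (hsE : ∀ b, pE (sE b) = b) {i : Fin r} (hi : i ≠ 0) :
    (fibPrj pE r i).comp (FibPow.padSection hpE sE hsE) = sE.comp ⟨pE, hpE⟩ :=
  ContinuousMap.ext fun _ => by simp [fibPrj, hi]

theorem section_comp_fibHomotopic_id_of_fibPi_section (hr : 2 ≤ r) (hpE : Continuous pE)
    {sE : C(B, E)} (hsE : ∀ b, pE (sE b) = b) {s : C(FibPow pE r, FibPathSpace pE)}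
    (hs : ∀ v, (s v).1.1 = pE (v.1 0))
    (hH : FibHomotopic (fun v : FibPow pE r => pE (v.1 0)) (fun v => pE (v.1 0))
      ((fibPi pE r).comp s) (ContinuousMap.id _)) :
    FibHomotopic pE pE (sE.comp ⟨pE, hpE⟩) (ContinuousMap.id E) := by
  set w : C(E, FibPow pE r) := FibPow.padSection hpE sE hsE
  have hw : ∀ x, pE ((w x).1 0) = pE x := by simp [w]
  have hcoord : ∀ i, FibHomotopic pE pE ((FibPathSpace.eval pE (evalTime r i)).comp (s.comp w))
      ((fibPrj pE r i).comp w) := fun i =>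
    (hH.comp_right w hw).comp_left (fibPrj pE r i) fun v => v.2 i 0
  have h0 := hcoord 0
  have hlast := hcoord ⟨r - 1, by omega⟩
  rw [evalTime_zero, fibPrj_comp_padSection_zero] at h0
  rw [evalTime_last hr,
    fibPrj_comp_padSection_of_ne_zero hpE sE hsE (by simp [Fin.ext_iff]; omega)] at hlast
  have hpath := FibHomotopic.eval_zero_eval_one (s.comp w) fun x => (hs (w x)).trans (hw x)
  exact hlast.symm.trans (hpath.symm.trans h0)

end FibPi

/-- For a fibrewise pointed space `E` over `B`: `E` is fibrewise contractible
(fibrewise homotopy equivalent to `B`) iff `TC_{B,r}(E) = 0`. -/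
theorem stmt17 {B E : Type*} [TopologicalSpace B] [TopologicalSpace E]
    (r : ℕ) [NeZero r] (hr : 2 ≤ r) (pE : E → B) (hpE : Continuous pE)
    (sE : C(B, E)) (hsE : ∀ b, pE (sE b) = b) :
    FibHtpyEquiv pE (id : B → B) ↔
      fibSecat (fun z : FibPathSpace pE => z.1.1) (fun v : FibPow pE r => pE (v.1 0))
        (fibPi pE r) = 0 := by
  rw [fibHtpyEquiv_id_iff_exists_section hpE, fibSecat_eq_zero_iff]
  constructor
  · rintro ⟨g, hg, hG⟩
    exact exists_fibPi_section_of_fibHomotopic hpE hg hG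
  · rintro ⟨s, hs, hH⟩
    exact ⟨sE, hsE, section_comp_fibHomotopic_id_of_fibPi_section hr hpE hsE hs hH⟩
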